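/- arXiv:1604.00702 — 2 statements merged into one kernel-verified Lean document; each statement's English description precedes it below -/
import Mathlib

section
/- Let $m \geq 3$ and suppose there exists a surjective group homomorphism $\phi : (\mathbb{Z}/2)^m / \langle (1,1,\dots,1) \rangle \to (\mathbb{Z}/2)^2$ (equivalently, a surjective homomorphism $\phi$ from the group $F = \langle a_1,\dots,a_m : a_i^2 = 1, a_i a_j = a_j a_i, a_1 a_2 \cdots a_m = 1\rangle$ onto $(\mathbb{Z}/2)^2$) such that $\phi(a_i) \neq 1$ for all $i$, and such that $\phi(a_{i+1}) = \rho(\phi(a_i))$ (indices mod $m$) for some automorphism $\rho$ of $(\mathbb{Z}/2)^2$. Then $m$ is divisible by $3$ or by $4$. -/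
/-!
Let `v = f 0`. Equivariance makes `f n = ρ^[n] v`, so `f` runs through the `ρ`-orbit of `v`,
whose length `p` divides `m`. The orbit avoids `0`, which leaves only three points, so `p ≤ 3`.
If `p = 1` then `f` is constant and its image generates a cyclic subgroup, which cannot be all of
`(ℤ/2)²`. If `p = 2` then `f` alternates between `v ≠ ρ v`, and the product relation reads
`(m / 2) • (v + ρ v) = 0` with `v + ρ v` of order `2`, so `4 ∣ m`. If `p = 3` then `3 ∣ m`.
-/

open Function Finset

theorem Function.minimalPeriod_le_card_of_iterate_mem {α : Type*} {f : α → α} {x : α}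
    {s : Finset α} (h : ∀ n, f^[n] x ∈ s) : minimalPeriod f x ≤ #s := by
  classical
  have hinj : Set.InjOn (f^[·] x) (range (minimalPeriod f x)) := by
    simpa only [coe_range] using iterate_injOn_Iio_minimalPeriod
  calc minimalPeriod f x = #((range (minimalPeriod f x)).image (f^[·] x)) := by
        rw [card_image_of_injOn hinj, card_range]
    _ ≤ #s := card_le_card (image_subset_iff.2 fun n _ => h n)

theorem Function.Periodic.sum_range_mul {M : Type*} [AddCommMonoid M] {a : ℕ → M}
    {p : ℕ} (ha : Periodic a p) (q : ℕ) :
    ∑ n ∈ range (p * q), a n = q • ∑ n ∈ range p, a n := by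
  induction q with
  | zero => simp
  | succ q ih =>
    rw [mul_add_one, sum_range_add, ih, succ_nsmul, mul_comm p q]
    exact congrArg _ (sum_congr rfl fun n _ => by rw [add_comm]; exact ha.nat_mul q n)

theorem Function.sum_range_iterate_of_minimalPeriod_dvd {M : Type*} [AddCommMonoid M]
    {f : M → M} {x : M} {m : ℕ} (h : minimalPeriod f x ∣ m) :
    ∑ n ∈ range m, f^[n] x =
      (m / minimalPeriod f x) • ∑ n ∈ range (minimalPeriod f x), f^[n] x := by
  obtain ⟨q, rfl⟩ := h
  rcases (minimalPeriod f x).eq_zero_or_pos with h0 | hpos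
  · simp [h0]
  · rw [Nat.mul_div_cancel_left q hpos]
    exact Periodic.sum_range_mul (fun n => iterate_add_minimalPeriod_eq) q

theorem ZMod.sum_univ_eq_sum_range {M : Type*} [AddCommMonoid M] (m : ℕ) [NeZero m]
    (g : ZMod m → M) : ∑ i, g i = ∑ n ∈ range m, g n :=
  sum_nbij' ZMod.val Nat.cast (fun i _ => mem_range.2 i.val_lt) (fun _ _ => mem_univ _)
    (fun i _ => ZMod.natCast_zmod_val i) (fun n hn => ZMod.val_cast_of_lt (mem_range.1 hn))
    (fun i _ => by rw [ZMod.natCast_zmod_val])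

theorem ZMod.apply_natCast_eq_iterate {α : Type*} {m : ℕ} {f : ZMod m → α} {g : α → α}
    (h : ∀ i, f (i + 1) = g (f i)) (n : ℕ) : f n = g^[n] (f 0) := by
  induction n with
  | zero => simp
  | succ n ih => rw [Nat.cast_succ, h, ih, iterate_succ_apply']

theorem ZMod.isPeriodicPt_of_apply_add_one {α : Type*} {m : ℕ} {f : ZMod m → α}
    {g : α → α} (h : ∀ i, f (i + 1) = g (f i)) : IsPeriodicPt g m (f 0) := by
  rw [IsPeriodicPt, IsFixedPt, ← ZMod.apply_natCast_eq_iterate h, ZMod.natCast_self]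

theorem zmultiples_ne_top_zmod_two_prod (v : ZMod 2 × ZMod 2) :
    AddSubgroup.zmultiples v ≠ ⊤ :=
  fun h => by
    have : IsAddCyclic (ZMod 2 × ZMod 2) := isAddCyclic_iff_exists_zmultiples_eq_top.2 ⟨v, h⟩
    simpa using coprime_card_of_isAddCyclic_prod (ZMod 2) (ZMod 2)

theorem CharTwo.two_dvd_of_nsmul_add_eq_zero {R : Type*} [Ring R] [CharP R 2] {x y : R}
    (hxy : x ≠ y) {q : ℕ} (h : q • (x + y) = 0) : 2 ∣ q := by
  have hord : addOrderOf (x + y) = 2 :=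
    addOrderOf_eq_prime (by rw [two_nsmul, CharTwo.add_self_eq_zero])
      (fun h => hxy (CharTwo.add_eq_zero.1 h))
  exact hord ▸ addOrderOf_dvd_of_nsmul_eq_zero h

theorem stmt_4_general (m : ℕ) [NeZero m] (f : ZMod m → ZMod 2 × ZMod 2)
    (hsum : ∑ i, f i = 0)
    (hne : ∀ i, f i ≠ 0)
    (hsurj : AddSubgroup.closure (Set.range f) = ⊤)
    (ρ : AddAut (ZMod 2 × ZMod 2)) (hρ : ∀ i, f (i + 1) = ρ (f i)) :
    3 ∣ m ∨ 4 ∣ m := by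
  have horbit := ZMod.apply_natCast_eq_iterate hρ
  have hnotfix : ¬ IsFixedPt ρ (f 0) := fun hfix => by
    refine zmultiples_ne_top_zmod_two_prod (f 0)
      (top_le_iff.1 (hsurj ▸ (AddSubgroup.closure_le _).2 ?_))
    rintro _ ⟨i, rfl⟩
    rw [← ZMod.natCast_zmod_val i, horbit, hfix.iterate]
    exact AddSubgroup.mem_zmultiples (f 0)
  have hdvd : minimalPeriod ρ (f 0) ∣ m :=
    (ZMod.isPeriodicPt_of_apply_add_one hρ).minimalPeriod_dvd
  have hle : minimalPeriod ρ (f 0) ≤ 3 :=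
    minimalPeriod_le_card_of_iterate_mem (f := ρ) (s := univ.erase 0) fun n => by
      simpa [← horbit] using hne n
  have hne1 : minimalPeriod ρ (f 0) ≠ 1 := by rwa [Ne, minimalPeriod_eq_one_iff_isFixedPt]
  have hpos : 0 < minimalPeriod ρ (f 0) := Nat.pos_of_dvd_of_pos hdvd (NeZero.pos m)
  obtain hp | hp : minimalPeriod ρ (f 0) = 2 ∨ minimalPeriod ρ (f 0) = 3 := by omega
  · have hhalf : (m / 2) • (f 0 + ρ (f 0)) = 0 := by
      rw [← hsum, ZMod.sum_univ_eq_sum_range, sum_congr rfl fun n _ => horbit n,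
        sum_range_iterate_of_minimalPeriod_dvd hdvd, hp]
      simp only [sum_range_succ, sum_range_zero, zero_add, iterate_zero_apply, iterate_one]
    have := CharTwo.two_dvd_of_nsmul_add_eq_zero (Ne.symm hnotfix) hhalf
    rw [hp] at hdvd
    omega
  · exact .inl (hp ▸ hdvd)

/-- Let `m ≥ 3`.  A surjective homomorphism from
`F = ⟨a₁,…,a_m : aᵢ² = 1, commuting, a₁⋯a_m = 1⟩` onto `(ℤ/2)²` is encoded by
its values `f i` on the generators, indexed cyclically by `ZMod m`, with
`∑ i, f i = 0` (the product relation) and the image of `f` generating `(ℤ/2)²`.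
If each `f i` is nontrivial and `f (i+1) = ρ (f i)` for some automorphism `ρ`
of `(ℤ/2)²`, then `m` is divisible by `3` or by `4`. -/
theorem stmt_4 (m : ℕ) [NeZero m] (hm : 3 ≤ m) (f : ZMod m → ZMod 2 × ZMod 2)
    (hsum : ∑ i, f i = 0)
    (hne : ∀ i, f i ≠ 0)
    (hsurj : AddSubgroup.closure (Set.range f) = ⊤)
    (ρ : AddAut (ZMod 2 × ZMod 2)) (hρ : ∀ i, f (i + 1) = ρ (f i)) :
    3 ∣ m ∨ 4 ∣ m :=
  stmt_4_general m f hsum hne hsurj ρ hρ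
end

section
/- Let $\omega_3$ be a primitive cube root of unity, $l \geq 2$, $m = 3l$, and $\omega_m = e^{2\pi i/m}$. Suppose $(x,y,z) \in \mathbb{C}^3$ satisfies $y^2 = (x^l-1)(x^l-\omega_3^2)$ and $z^2 = (x^l-\omega_3)(x^l-\omega_3^2)$ with $x^l \neq \omega_3^2$. Then $(-\omega_3 z)^2 = ((\omega_m x)^l - 1)((\omega_m x)^l - \omega_3^2)$ and $\left(\frac{\omega_3 y z}{x^l - \omega_3^2}\right)^2 = ((\omega_m x)^l - \omega_3)((\omega_m x)^l - \omega_3^2)$; that is, $t(x,y,z) = (\omega_m x, -\omega_3 z, \omega_3 yz/(x^l - \omega_3^2))$ preserves the curve. -/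
open Complex

/-- with `ω₃ = e^{2πi/3}`, `m = 3l`, `ω_m = e^{2πi/m}`, the map
`t(x,y,z) = (ω_m x, −ω₃ z, ω₃ y z/(xˡ − ω₃²))` preserves the affine curve
`{y² = (xˡ−1)(xˡ−ω₃²), z² = (xˡ−ω₃)(xˡ−ω₃²)}` away from `xˡ = ω₃²`. -/
theorem stmt_19 (l m : ℕ) (hl : 2 ≤ l) (hm : m = 3 * l) (x y z : ℂ)
    (ω₃ ωm : ℂ)
    (hω₃ : ω₃ = Complex.exp (2 * Real.pi * Complex.I / 3))
    (hωm : ωm = Complex.exp (2 * Real.pi * Complex.I / m))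
    (hy : y ^ 2 = (x ^ l - 1) * (x ^ l - ω₃ ^ 2))
    (hz : z ^ 2 = (x ^ l - ω₃) * (x ^ l - ω₃ ^ 2))
    (hx : x ^ l ≠ ω₃ ^ 2) :
    (-ω₃ * z) ^ 2 = ((ωm * x) ^ l - 1) * ((ωm * x) ^ l - ω₃ ^ 2) ∧
    (ω₃ * y * z / (x ^ l - ω₃ ^ 2)) ^ 2
      = ((ωm * x) ^ l - ω₃) * ((ωm * x) ^ l - ω₃ ^ 2) := by
  have hl0 : (l:ℂ) ≠ 0 := by
    exact Nat.cast_ne_zero.mpr (by omega)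
  have hωl : ωm ^ l = ω₃ := by
    rw [hωm, ← Complex.exp_nat_mul, hω₃, hm]
    congr 1
    push_cast
    field_simp
  have hω3 : ω₃ ^ 3 = 1 := by
    rw [hω₃, ← Complex.exp_nat_mul]
    rw [show ((3:ℕ):ℂ) * (2 * Real.pi * Complex.I / 3) = (2 * Real.pi) * Complex.I by push_cast; ring]
    simp [Complex.exp_int_mul_two_pi_mul_I 1]
  have key : (ωm * x) ^ l = ω₃ * x ^ l := by rw [mul_pow, hωl]
  constructor
  · rw [key]
    have : (-ω₃ * z) ^ 2 = ω₃ ^ 2 * z ^ 2 := by ring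
    rw [this, hz]
    linear_combination (ω₃ ^ 2 - x ^ l * ω₃) * hω3
  · rw [key, div_pow]
    rw [div_eq_iff (pow_ne_zero 2 (sub_ne_zero.mpr hx))]
    have : (ω₃ * y * z) ^ 2 = ω₃ ^ 2 * y ^ 2 * z ^ 2 := by ring
    rw [this, hy, hz]
    ring
end
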